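/- (Mirror property.) Let F_1, F_2 : ℝ⁴ → ℝ satisfy F_1(a, b, c, d) = F_2(b, a, c, d) for all a, b, c, d ∈ ℝ, and assume Δz_{i+1/2} ≠ 0. Define C_k = F_k(θ_i^+, θ_{i+1}^-, |Δz_{i+1/2}|, |z_i| + |z_{i+1}|) and let z^±_{i+1/2} be the resulting WENO reconstructions. Let the mirrored data about the interface be z'_{i-1} = z_{i+2}, z'_i = z_{i+1}, z'_{i+1} = z_i, z'_{i+2} = z_{i-1}. Then applying the identical procedure to the mirrored data yields swapped reconstructions: (z')^-_{i+1/2} = z^+_{i+1/2} and (z')^+_{i+1/2} = z^-_{i+1/2}. -/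

import Mathlib

/-- Left WENO reconstruction at the interface `x_{i+1/2}` from the data
`(z_{i-1}, z_i, z_{i+1})` with perturbation `C₁`. -/
noncomputable def wenoLeft (zm z0 z1 C1 : ℝ) : ℝ :=
  ((3/4 + 2*C1)*(z0 + z1) + (1/4 - 2*C1)*(3*z0 - zm))/2

/-- Right WENO reconstruction at the interface `x_{i+1/2}` from the data
`(z_i, z_{i+1}, z_{i+2})` with perturbation `C₂`. -/
noncomputable def wenoRight (z0 z1 z2 C2 : ℝ) : ℝ :=
  ((1/4 - 2*C2)*(3*z1 - z2) + (3/4 + 2*C2)*(z0 + z1))/2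

/- Reflecting the stencil about `x_{i+1/2}` exchanges the two candidate stencils of each
reconstruction and the optimal weights `3/4, 1/4` of the left one with the weights `1/4, 3/4`
of the right one; the jump ratios are unchanged up to swapping `θ⁺_i` and `θ⁻_{i+1}`. -/

theorem sub_div_sub_swap {α : Type*} [DivisionRing α] (a b c d : α) :
    (a - b) / (c - d) = (b - a) / (d - c) := by
  rw [← neg_div_neg_eq, neg_sub, neg_sub]

theorem wenoLeft_mirror (z0 z1 z2 C : ℝ) : wenoLeft z2 z1 z0 C = wenoRight z0 z1 z2 C := by
  unfold wenoLeft wenoRight; ring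

theorem wenoRight_mirror (zm z0 z1 C : ℝ) : wenoRight z1 z0 zm C = wenoLeft zm z0 z1 C := by
  unfold wenoLeft wenoRight; ring

theorem weno_mirror_property_general (F1 F2 : ℝ → ℝ → ℝ → ℝ → ℝ)
    (hF : ∀ a b c d : ℝ, F1 a b c d = F2 b a c d)
    (zm z0 z1 z2 : ℝ) :
    wenoLeft z2 z1 z0
        (F1 ((z1 - z2)/(z0 - z1)) ((zm - z0)/(z0 - z1)) |z0 - z1| (|z1| + |z0|))
      = wenoRight z0 z1 z2
          (F2 ((z0 - zm)/(z1 - z0)) ((z2 - z1)/(z1 - z0)) |z1 - z0| (|z0| + |z1|)) ∧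
    wenoRight z1 z0 zm
        (F2 ((z1 - z2)/(z0 - z1)) ((zm - z0)/(z0 - z1)) |z0 - z1| (|z1| + |z0|))
      = wenoLeft zm z0 z1
          (F1 ((z0 - zm)/(z1 - z0)) ((z2 - z1)/(z1 - z0)) |z1 - z0| (|z0| + |z1|)) := by
  rw [sub_div_sub_swap z1 z2, sub_div_sub_swap zm z0, abs_sub_comm z0 z1, add_comm |z1|, hF, hF]
  exact ⟨wenoLeft_mirror .., wenoRight_mirror ..⟩

/-- Mirror property: if `F₁(a,b,c,d) = F₂(b,a,c,d)` for all
`a,b,c,d`, and the perturbations are computed as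
`C_k = F_k(θ⁺_i, θ⁻_{i+1}, |Δz_{i+1/2}|, |z_i| + |z_{i+1}|)`, then applying the
identical procedure to the mirrored data
`(z'_{i-1}, z'_i, z'_{i+1}, z'_{i+2}) = (z_{i+2}, z_{i+1}, z_i, z_{i-1})`
yields the swapped reconstructions: `(z')⁻_{i+1/2} = z⁺_{i+1/2}` and
`(z')⁺_{i+1/2} = z⁻_{i+1/2}`. -/
theorem weno_mirror_property (F1 F2 : ℝ → ℝ → ℝ → ℝ → ℝ)
    (hF : ∀ a b c d : ℝ, F1 a b c d = F2 b a c d)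
    (zm z0 z1 z2 : ℝ) (hΔ : z1 - z0 ≠ 0) :
    wenoLeft z2 z1 z0
        (F1 ((z1 - z2)/(z0 - z1)) ((zm - z0)/(z0 - z1)) |z0 - z1| (|z1| + |z0|))
      = wenoRight z0 z1 z2
          (F2 ((z0 - zm)/(z1 - z0)) ((z2 - z1)/(z1 - z0)) |z1 - z0| (|z0| + |z1|)) ∧
    wenoRight z1 z0 zm
        (F2 ((z1 - z2)/(z0 - z1)) ((zm - z0)/(z0 - z1)) |z0 - z1| (|z1| + |z0|))
      = wenoLeft zm z0 z1
          (F1 ((z0 - zm)/(z1 - z0)) ((z2 - z1)/(z1 - z0)) |z1 - z0| (|z0| + |z1|)) :=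
  weno_mirror_property_general F1 F2 hF zm z0 z1 z2
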